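/- arXiv:2508.14714 — 2 statements merged into one kernel-verified Lean document; each statement's English description precedes it below -/
import Mathlib

section
/- Let n ≥ 4 be an integer and let z : ZMod n → ℝ satisfy z(0) < z(1) < ⋯ < z(n−1), where the indices are the canonical representatives 0, 1, …, n−1 of ZMod n (in particular z is injective). Then 0 < u_e(z) < 1 for every chord e ∈ E. -/
namespace M0n

/-- `{i, j}` is a chord of the `n`-gon: `j ∉ {i-1, i, i+1}`. -/
def IsChord (n : ℕ) (p : Sym2 (ZMod n)) : Prop :=
  ∀ i j : ZMod n, p = s(i, j) → j ≠ i - 1 ∧ j ≠ i ∧ j ≠ i + 1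

instance (n : ℕ) [NeZero n] : DecidablePred (IsChord n) := fun p =>
  inferInstanceAs (Decidable (∀ i j : ZMod n, p = s(i, j) → j ≠ i - 1 ∧ j ≠ i ∧ j ≠ i + 1))

/-- The finite set `E` of chords of the `n`-gon. -/
def chords (n : ℕ) [NeZero n] : Finset (Sym2 (ZMod n)) :=
  Finset.univ.filter (IsChord n)

/-- `x` lies in the cyclic open interval `{i+1, …, j-1}` from `i` to `j`. -/
def CycBtw {n : ℕ} (i x j : ZMod n) : Prop :=
  0 < (x - i).val ∧ (x - i).val < (j - i).val

instance {n : ℕ} (i x j : ZMod n) : Decidable (CycBtw i x j) :=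
  inferInstanceAs (Decidable (0 < (x - i).val ∧ (x - i).val < (j - i).val))

/-- Two chords cross: exactly one endpoint of `q` lies in the cyclic open interval
from `i` to `j`, for every ordered representation `(i, j)` of `p`. -/
def Crosses (n : ℕ) (p q : Sym2 (ZMod n)) : Prop :=
  ∀ i j k l : ZMod n, p = s(i, j) → q = s(k, l) → Xor (CycBtw i k j) (CycBtw i l j)

instance (n : ℕ) [NeZero n] (p q : Sym2 (ZMod n)) : Decidable (Crosses n p q) :=
  inferInstanceAs (Decidable (∀ i j k l : ZMod n,
    p = s(i, j) → q = s(k, l) → Xor (CycBtw i k j) (CycBtw i l j)))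

/-- The dihedral coordinate (cross-ratio)
`u_{ij}(z) = ((z i - z (j+1)) (z (i+1) - z j)) / ((z i - z j) (z (i+1) - z (j+1)))`,
well defined on unordered pairs. -/
def u {n : ℕ} {K : Type*} [Field K] (z : ZMod n → K) : Sym2 (ZMod n) → K :=
  Sym2.lift ⟨fun i j =>
    ((z i - z (j + 1)) * (z (i + 1) - z j)) / ((z i - z j) * (z (i + 1) - z (j + 1))), by
      intro i j
      have h1 : (z i - z (j + 1)) * (z (i + 1) - z j)
          = (z j - z (i + 1)) * (z (j + 1) - z i) := by ring
      have h2 : (z i - z j) * (z (i + 1) - z (j + 1))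
          = (z j - z i) * (z (j + 1) - z (i + 1)) := by ring
      dsimp only
      rw [h1, h2]⟩

/-- The cyclic interval `{a, a+1, …, a+m-1}` in `ZMod n`. -/
def cycInt {n : ℕ} (a : ZMod n) (m : ℕ) : Finset (ZMod n) :=
  (Finset.range m).image fun t : ℕ => a + (t : ZMod n)

/-- A partition of `ZMod n` into four nonempty cyclic intervals `A, B, C, D`
appearing in this cyclic order. -/
structure CyclicFourPartition (n : ℕ) where
  a : ZMod n
  p : ℕ
  q : ℕ
  r : ℕ
  t : ℕ
  hp : 0 < p
  hq : 0 < q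
  hr : 0 < r
  ht : 0 < t
  hsum : p + q + r + t = n

namespace CyclicFourPartition

variable {n : ℕ} (P : CyclicFourPartition n)

def A : Finset (ZMod n) := cycInt P.a P.p
def B : Finset (ZMod n) := cycInt (P.a + (P.p : ZMod n)) P.q
def C : Finset (ZMod n) := cycInt (P.a + (P.p : ZMod n) + (P.q : ZMod n)) P.r
def D : Finset (ZMod n) := cycInt (P.a + (P.p : ZMod n) + (P.q : ZMod n) + (P.r : ZMod n)) P.t

end CyclicFourPartition

/-- A sign pattern is consistent if it does not contradict any extended u-relation:
for every cyclic 4-partition `(A,B,C,D)`, one of the two products of signs is `1`. -/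
def Consistent (n : ℕ) (s : Sym2 (ZMod n) → ℤ) : Prop :=
  ∀ P : CyclicFourPartition n,
    (∏ x ∈ P.A, ∏ y ∈ P.C, s s(x, y)) = 1 ∨ (∏ x ∈ P.B, ∏ y ∈ P.D, s s(x, y)) = 1

/-- A sign pattern is realizable if it is the sign vector of the dihedral coordinates
of some injective real configuration. -/
def Realizable (n : ℕ) [NeZero n] (s : Sym2 (ZMod n) → ℤ) : Prop :=
  ∃ z : ZMod n → ℝ, Function.Injective z ∧ ∀ e ∈ chords n, Real.sign (u z e) = (s e : ℝ)

/-- The length of a chord `{i,j}`: `min (d, n - d)` where `d = (j - i).val`. -/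
def chordLength (n : ℕ) (p : Sym2 (ZMod n)) : ℕ :=
  Sym2.lift ⟨fun i j => min (j - i).val (i - j).val, fun _ _ => min_comm _ _⟩ p

/-- `Neg z`: the number of negative chords of a real configuration. -/
noncomputable def negCount (n : ℕ) [NeZero n] (z : ZMod n → ℝ) : ℕ :=
  Set.ncard {e : Sym2 (ZMod n) | e ∈ chords n ∧ u z e < 0}

/-- The set of real points of `M_{0,n}` in its dihedral embedding:
nowhere-zero real solutions of all primitive u-relations in `ℝ^E`. -/
def Vset (n : ℕ) [NeZero n] : Set ({e : Sym2 (ZMod n) // e ∈ chords n} → ℝ) :=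
  {w | (∀ c, w c ≠ 0) ∧ ∀ c,
    w c + ∏ e ∈ Finset.univ.filter
        (fun e : {e : Sym2 (ZMod n) // e ∈ chords n} => Crosses n e.1 c.1), w e = 1}

/-- The part `M_{0,n}(ℝ_s)` of `V` in the open orthant given by the sign pattern `s`. -/
def VsSet (n : ℕ) [NeZero n] (s : Sym2 (ZMod n) → ℤ) :
    Set ({e : Sym2 (ZMod n) // e ∈ chords n} → ℝ) :=
  {w ∈ Vset n | ∀ c : {e : Sym2 (ZMod n) // e ∈ chords n}, Real.sign (w c) = (s c.1 : ℝ)}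

/-! The canonical representatives `i < i + 1 < j < j + 1` of a chord are increasing up to the
single wrap-around `j + 1 = 0`, so the four points `z i, z (i+1), z j, z (j+1)` are in cyclic
order on the real line. For such points the cross-ratio `u` and `1 - u` are both ratios of
products with matching signs, since `1 - u = (b - a)(d - c) / ((a - c)(b - d))`. -/

section CrossRatio

variable {K : Type*} [Field K]

def crossRatio (a b c d : K) : K := (a - d) * (b - c) / ((a - c) * (b - d))

lemma one_sub_crossRatio {a b c d : K} (hac : a ≠ c) (hbd : b ≠ d) :
    1 - crossRatio a b c d = (b - a) * (d - c) / ((a - c) * (b - d)) := by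
  have hden : (a - c) * (b - d) ≠ 0 := mul_ne_zero (sub_ne_zero.2 hac) (sub_ne_zero.2 hbd)
  rw [crossRatio, one_sub_div hden]
  ring

lemma crossRatio_mem_Ioo [LinearOrder K] [IsStrictOrderedRing K] {a b c d : K}
    (hab : a < b) (hbc : b < c) (hd : c < d ∨ d < a) :
    crossRatio a b c d ∈ Set.Ioo 0 1 := by
  have hac : a ≠ c := (hab.trans hbc).ne
  have hbd : b ≠ d := by rintro rfl; rcases hd with h | h <;> linarith
  rw [Set.mem_Ioo, ← sub_pos (a := (1 : K)), one_sub_crossRatio hac hbd, crossRatio]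
  rcases hd with hcd | hda
  · have hden : 0 < (a - c) * (b - d) := mul_pos_of_neg_of_neg (by linarith) (by linarith)
    exact ⟨div_pos (mul_pos_of_neg_of_neg (by linarith) (by linarith)) hden,
      div_pos (mul_pos (by linarith) (by linarith)) hden⟩
  · have hden : (a - c) * (b - d) < 0 := mul_neg_of_neg_of_pos (by linarith) (by linarith)
    exact ⟨div_pos_of_neg_of_neg (mul_neg_of_pos_of_neg (by linarith) (by linarith)) hden,
      div_pos_of_neg_of_neg (mul_neg_of_pos_of_neg (by linarith) (by linarith)) hden⟩

end CrossRatio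

lemma u_mk {n : ℕ} {K : Type*} [Field K] (z : ZMod n → K) (i j : ZMod n) :
    u z s(i, j) = crossRatio (z i) (z (i + 1)) (z j) (z (j + 1)) :=
  rfl

lemma _root_.ZMod.val_add_one {n : ℕ} [NeZero n] (i : ZMod n) :
    (i + 1).val = (i.val + 1) % n := by
  rw [ZMod.val_add, ZMod.val_one_eq_one_mod, Nat.add_mod_mod]

lemma IsChord.val_cyclic_order {n : ℕ} [NeZero n] {i j : ZMod n} (hc : IsChord n s(i, j))
    (hij : i.val < j.val) :
    i.val < (i + 1).val ∧ (i + 1).val < j.val ∧ (j.val < (j + 1).val ∨ (j + 1).val < i.val) := by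
  obtain ⟨hj_pred, -, hj_succ⟩ := hc i j rfl
  have hj := ZMod.val_lt j
  have hi_succ : (i + 1).val = i.val + 1 := by
    rw [ZMod.val_add_one, Nat.mod_eq_of_lt (by omega)]
  have hi_succ_ne : (i + 1).val ≠ j.val := fun h => hj_succ (ZMod.val_injective n h).symm
  refine ⟨by omega, by omega, ?_⟩
  rcases Nat.lt_or_ge (j.val + 1) n with hwrap | hwrap
  · left
    rw [ZMod.val_add_one, Nat.mod_eq_of_lt hwrap]
    omega
  · right
    have hj_succ_zero : (j + 1).val = 0 := by
      rw [ZMod.val_add_one, show j.val + 1 = n by omega, Nat.mod_self]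
    have hi_ne_zero : i ≠ 0 := by
      rintro rfl
      exact hj_pred (eq_sub_of_add_eq ((ZMod.val_eq_zero _).1 hj_succ_zero))
    rw [hj_succ_zero]
    exact Nat.pos_of_ne_zero (mt (ZMod.val_eq_zero i).1 hi_ne_zero)

lemma u_mem_Ioo_of_val_lt {n : ℕ} [NeZero n] {z : ZMod n → ℝ}
    (hmono : ∀ i j : ZMod n, i.val < j.val → z i < z j) {i j : ZMod n}
    (hc : IsChord n s(i, j)) (hij : i.val < j.val) :
    u z s(i, j) ∈ Set.Ioo 0 1 := by
  obtain ⟨h₁, h₂, h₃⟩ := hc.val_cyclic_order hij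
  rw [u_mk]
  exact crossRatio_mem_Ioo (hmono _ _ h₁) (hmono _ _ h₂) (h₃.imp (hmono _ _) (hmono _ _))

theorem increasing_config_u_in_unit_interval_general (n : ℕ) [NeZero n]
    (z : ZMod n → ℝ) (hmono : ∀ i j : ZMod n, i.val < j.val → z i < z j) :
    ∀ e ∈ chords n, 0 < u z e ∧ u z e < 1 := by
  intro e he
  induction e using Sym2.ind with
  | _ i j =>
    have hc : IsChord n s(i, j) := (Finset.mem_filter.mp he).2
    rcases lt_trichotomy i.val j.val with h | h | h
    · exact u_mem_Ioo_of_val_lt hmono hc h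
    · exact absurd (ZMod.val_injective n h).symm (hc i j rfl).2.1
    · rw [Sym2.eq_swap] at hc ⊢
      exact u_mem_Ioo_of_val_lt hmono hc h

/-- For `n ≥ 4` and `z : ZMod n → ℝ` with
`z 0 < z 1 < ⋯ < z (n-1)` (indices ordered by canonical representatives),
every dihedral coordinate satisfies `0 < u_e(z) < 1`. -/
theorem increasing_config_u_in_unit_interval (n : ℕ) [NeZero n] (hn : 4 ≤ n)
    (z : ZMod n → ℝ) (hmono : ∀ i j : ZMod n, i.val < j.val → z i < z j) :
    ∀ e ∈ chords n, 0 < u z e ∧ u z e < 1 :=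
  increasing_config_u_in_unit_interval_general n z hmono

end M0n
end

section
/- Let n ≥ 4 be an integer, let z, z' : ZMod n → ℝ be injective, and let σ, σ' be the (unique) permutations of ZMod n such that k ↦ z(σ(k)) and k ↦ z'(σ'(k)) are strictly increasing as the index k runs through the canonical representatives 0, 1, …, n−1 of ZMod n. Then sign(u_e(z)) = sign(u_e(z')) for every chord e ∈ E if and only if σ⁻¹ ∘ σ' belongs to the dihedral subgroup D of Perm(ZMod n) generated by the rotation x ↦ x + 1 and the reflection x ↦ −x. (Thus realizable sign patterns are in bijection with the (n−1)!/2 dihedral orderings of the n labels.) -/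
/-!
Put `π = σ⁻¹`, so that `π k` is the rank of `z k` on the line. The cross-ratio `u_{ij}(z)` is
negative exactly when the pairs `{z i, z (i+1)}` and `{z j, z (j+1)}` interlace on the line, i.e.
when the edges `{π i, π (i+1)}` and `{π j, π (j+1)}` of the closed polygon
`π 0, π 1, …, π (n-1)` inscribed in the `n`-cycle cross. Rotations and reflections of the cycle
preserve crossings.

Conversely, as `l` moves to `l + 1` the vertex `π l` changes side of edge `j` exactly when edge
`l` crosses edge `j`. So the crossings determine, up to complement, which vertices lie on the arc
cut off by edge `j`, and counting them gives the step `π (j+1) - π j`. After a reflection the two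
polygons agree on the arc of edge `0`; the vertex shared by consecutive edges passes this
agreement on to every edge, so all steps agree and the polygons differ by a rotation.
-/

namespace M0n

open Equiv Finset

variable {n : ℕ}

section CycBtw

lemma val_sub_eq_ite [NeZero n] (a b : ZMod n) :
    (a - b).val = if b.val ≤ a.val then a.val - b.val else a.val + n - b.val := by
  split_ifs with h
  · exact ZMod.val_sub h
  · have hsum := ZMod.val_add (a - b) b
    rw [sub_add_cancel] at hsum
    have := ZMod.val_lt (a - b)
    have := ZMod.val_lt b
    have hge : n ≤ (a - b).val + b.val := by
      by_contra! hlt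
      rw [Nat.mod_eq_of_lt hlt] at hsum
      omega
    rw [Nat.mod_eq_sub_mod hge, Nat.mod_eq_of_lt (by omega)] at hsum
    omega

lemma not_cycBtw_left (a b : ZMod n) : ¬CycBtw a a b := by simp [CycBtw]

lemma not_cycBtw_right (a b : ZMod n) : ¬CycBtw a b b := by simp [CycBtw]

lemma cycBtw_add_left (c a x b : ZMod n) : CycBtw (c + a) (c + x) (c + b) ↔ CycBtw a x b := by
  simp only [CycBtw, add_sub_add_left_eq_sub]

lemma cycBtw_neg [NeZero n] (a x b : ZMod n) : CycBtw (-a) (-x) (-b) ↔ CycBtw b x a := by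
  have := ZMod.val_lt a; have := ZMod.val_lt b; have := ZMod.val_lt x
  simp only [CycBtw, neg_sub_neg, val_sub_eq_ite]
  split_ifs <;> omega

lemma cycBtw_rotate [NeZero n] (a x b : ZMod n) : CycBtw a x b ↔ CycBtw x b a := by
  have := ZMod.val_lt a; have := ZMod.val_lt b; have := ZMod.val_lt x
  simp only [CycBtw, val_sub_eq_ite]
  split_ifs <;> omega

lemma not_cycBtw_iff [NeZero n] {a x b : ZMod n} (hab : a ≠ b) (hxa : x ≠ a) (hxb : x ≠ b) :
    ¬CycBtw a x b ↔ CycBtw b x a := by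
  have := ZMod.val_lt a; have := ZMod.val_lt b; have := ZMod.val_lt x
  have := (ZMod.val_injective n).ne hab
  have := (ZMod.val_injective n).ne hxa
  have := (ZMod.val_injective n).ne hxb
  simp only [CycBtw, val_sub_eq_ite]
  split_ifs <;> omega

lemma cycBtw_iff_val_mem_uIoo [NeZero n] {a x b : ZMod n} (hab : a ≠ b) (hxa : x ≠ a)
    (hxb : x ≠ b) : CycBtw a x b ↔ (x.val ∈ Set.uIoo a.val b.val ↔ a.val < b.val) := by
  have := ZMod.val_lt a; have := ZMod.val_lt b; have := ZMod.val_lt x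
  have := (ZMod.val_injective n).ne hab
  have := (ZMod.val_injective n).ne hxa
  have := (ZMod.val_injective n).ne hxb
  simp only [CycBtw, val_sub_eq_ite, Set.uIoo, Set.mem_Ioo, inf_lt_iff, lt_sup_iff]
  split_ifs <;> omega

lemma card_filter_cycBtw [NeZero n] (a b : ZMod n) :
    #{x | CycBtw a x b} = (b - a).val - 1 := by
  rw [← Nat.sub_zero (b - a).val, ← Nat.card_Ioo]
  apply Finset.card_nbij' (fun x => (x - a).val) (fun t => a + t)
  · intro x hx
    simpa [CycBtw] using hx
  · intro t ht
    simp only [coe_Ioo, Set.mem_Ioo] at ht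
    have : (t : ZMod n).val = t := ZMod.val_cast_of_lt (by have := ZMod.val_lt (b - a); omega)
    simp only [mem_coe, mem_filter, mem_univ, true_and]
    simpa only [CycBtw, add_sub_cancel_left, this] using ht
  · intro x _
    simp
  · intro t ht
    simp only [coe_Ioo, Set.mem_Ioo] at ht
    simpa using ZMod.val_cast_of_lt (by have := ZMod.val_lt (b - a); omega)

end CycBtw

section Dihedral

variable (n) in
def dihedral : Subgroup (Perm (ZMod n)) :=
  Subgroup.closure {Equiv.addLeft 1, Equiv.neg (ZMod n)}

lemma addLeft_mem_dihedral [NeZero n] (c : ZMod n) : Equiv.addLeft c ∈ dihedral n := by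
  have hc : Equiv.addLeft c = Equiv.addLeft (1 : ZMod n) ^ c.val := by
    rw [Equiv.nsmul_addLeft, nsmul_one, ZMod.natCast_zmod_val]
  exact hc ▸ pow_mem (Subgroup.subset_closure (Set.mem_insert _ _)) _

lemma neg_mem_dihedral : Equiv.neg (ZMod n) ∈ dihedral n :=
  Subgroup.subset_closure (Set.mem_insert_of_mem _ rfl)

def PreservesCycBtw (g : Perm (ZMod n)) : Prop :=
  ∀ a x b, CycBtw (g a) (g x) (g b) ↔ CycBtw a x b

def ReversesCycBtw (g : Perm (ZMod n)) : Prop :=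
  ∀ a x b, CycBtw (g a) (g x) (g b) ↔ CycBtw b x a

lemma reversesCycBtw_neg [NeZero n] : ReversesCycBtw (Equiv.neg (ZMod n)) :=
  fun a x b => cycBtw_neg a x b

lemma preservesCycBtw_or_reversesCycBtw [NeZero n] {g : Perm (ZMod n)} (hg : g ∈ dihedral n) :
    PreservesCycBtw g ∨ ReversesCycBtw g := by
  induction hg using Subgroup.closure_induction with
  | mem g hg =>
    rcases hg with rfl | rfl
    · exact .inl fun a x b => cycBtw_add_left 1 a x b
    · exact .inr reversesCycBtw_neg
  | one => exact .inl fun _ _ _ => Iff.rfl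
  | mul g h _ _ hg hh =>
    rcases hg with hg | hg <;> rcases hh with hh | hh
    · exact .inl fun a x b => (hg _ _ _).trans (hh a x b)
    · exact .inr fun a x b => (hg _ _ _).trans (hh a x b)
    · exact .inr fun a x b => (hg _ _ _).trans (hh b x a)
    · exact .inl fun a x b => (hg _ _ _).trans (hh b x a)
  | inv g _ hg =>
    rcases hg with hg | hg
    · exact .inl fun a x b => by simpa using (hg (g⁻¹ a) (g⁻¹ x) (g⁻¹ b)).symm
    · exact .inr fun a x b => by simpa using (hg (g⁻¹ b) (g⁻¹ x) (g⁻¹ a)).symm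

end Dihedral

section Polygon

variable {π π' : Perm (ZMod n)}

def InArc (π : Perm (ZMod n)) (j l : ZMod n) : Prop :=
  CycBtw (π j) (π l) (π (j + 1))

instance (π : Perm (ZMod n)) (j : ZMod n) : DecidablePred (InArc π j) :=
  fun l => inferInstanceAs (Decidable (CycBtw (π j) (π l) (π (j + 1))))

def EdgesCross (π : Perm (ZMod n)) (i j : ZMod n) : Prop :=
  Xor (InArc π i j) (InArc π i (j + 1))

def SameCrossings (π π' : Perm (ZMod n)) : Prop :=
  ∀ i j, j ≠ i - 1 → j ≠ i → j ≠ i + 1 → (EdgesCross π i j ↔ EdgesCross π' i j)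

lemma SameCrossings.trans {π'' : Perm (ZMod n)} (h : SameCrossings π π')
    (h' : SameCrossings π' π'') : SameCrossings π π'' :=
  fun i j h1 h2 h3 => (h i j h1 h2 h3).trans (h' i j h1 h2 h3)

lemma chord_endpoints_ne {i j : ZMod n} (h1 : j ≠ i - 1) (h2 : j ≠ i) :
    i ≠ i + 1 ∧ j + 1 ≠ i ∧ j + 1 ≠ i + 1 :=
  have : Nontrivial (ZMod n) := nontrivial_of_ne j i h2
  ⟨by simp, fun h => h1 (eq_sub_of_add_eq h), fun h => h2 (add_right_cancel h)⟩

lemma inArc_mul_iff_of_reverses [NeZero n] {g : Perm (ZMod n)} (hg : ReversesCycBtw g)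
    {i l : ZMod n} (hi : i ≠ i + 1) (hli : l ≠ i) (hli' : l ≠ i + 1) :
    InArc (g * π) i l ↔ ¬InArc π i l := by
  rw [InArc, InArc, Perm.mul_apply, Perm.mul_apply, Perm.mul_apply, hg,
    not_cycBtw_iff (π.injective.ne hi) (π.injective.ne hli) (π.injective.ne hli')]

lemma sameCrossings_mul_left [NeZero n] {g : Perm (ZMod n)} (hg : g ∈ dihedral n) :
    SameCrossings π (g * π) := by
  intro i j h1 h2 h3
  obtain ⟨hi, hj1, hj1'⟩ := chord_endpoints_ne h1 h2
  rcases preservesCycBtw_or_reversesCycBtw hg with hg | hg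
  · simp only [EdgesCross, InArc, Perm.mul_apply, hg _ _ _]
  · rw [EdgesCross, EdgesCross, inArc_mul_iff_of_reverses hg hi h2 h3,
      inArc_mul_iff_of_reverses hg hi hj1 hj1']
    exact xor_not_not.symm

end Polygon

section Reconstruction

variable {π π' : Perm (ZMod n)}

lemma zmod_induction [NeZero n] {P : ZMod n → Prop} (zero : P 0) (succ : ∀ j, P j → P (j + 1))
    (j : ZMod n) : P j := by
  obtain ⟨k, rfl⟩ := ZMod.natCast_zmod_surjective j
  induction k with
  | zero => simpa using zero
  | succ k ih => simpa using succ _ ih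

lemma iff_of_forall_iff_add_one {P : ZMod n → Prop} (a : ZMod n) {k : ℕ}
    (h : ∀ t < k, P (a + t) ↔ P (a + t + 1)) {t : ℕ} (ht : t ≤ k) : P (a + t) ↔ P a := by
  induction t with
  | zero => simp
  | succ t ih => rw [Nat.cast_succ, ← add_assoc, ← h t (by omega), ih (by omega)]

lemma natCast_ne_zero_of_lt {k : ℕ} (hk : 0 < k) (hkn : k < n) : (k : ZMod n) ≠ 0 :=
  (ZMod.natCast_eq_zero_iff k n).not.2 (Nat.not_dvd_of_pos_of_lt hk hkn)

lemma one_ne_zero_and_two_ne_zero (hn : 3 ≤ n) : (1 : ZMod n) ≠ 0 ∧ (2 : ZMod n) ≠ 0 :=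
  ⟨by simpa using natCast_ne_zero_of_lt (n := n) one_pos (by omega),
    by simpa using natCast_ne_zero_of_lt (n := n) two_pos (by omega)⟩

lemma exists_eq_add_two_add_natCast [NeZero n] {j m : ZMod n} (h0 : m ≠ j)
    (h1 : m ≠ j + 1) :
    ∃ t : ℕ, t + 3 ≤ n ∧ m = j + 2 + t := by
  have hv : ((m - j).val : ZMod n) = m - j := ZMod.natCast_zmod_val _
  have hv0 : (m - j).val ≠ 0 := fun h => h0 (sub_eq_zero.1 (by rw [← hv, h, Nat.cast_zero]))
  have hv1 : (m - j).val ≠ 1 :=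
    fun h => h1 (by rw [← sub_eq_iff_eq_add', ← hv, h, Nat.cast_one])
  have := ZMod.val_lt (m - j)
  refine ⟨(m - j).val - 2, by omega, ?_⟩
  rw [Nat.cast_sub (by omega), hv]
  push_cast
  ring

def SameArc (π π' : Perm (ZMod n)) (j : ZMod n) : Prop :=
  ∀ l, InArc π j l ↔ InArc π' j l

lemma sameArc_of_inArc_iff (hn : 3 ≤ n) (h : SameCrossings π π') {j l : ZMod n} (hl : l ≠ j)
    (hl' : l ≠ j + 1) (hjl : InArc π j l ↔ InArc π' j l) : SameArc π π' j := by
  have : NeZero n := ⟨by omega⟩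
  let Q : ZMod n → Prop := fun m => InArc π j m ↔ InArc π' j m
  have hstep : ∀ t < n - 3, Q (j + 2 + t) ↔ Q (j + 2 + t + 1) := by
    intro t ht
    have hcross := h j (j + 2 + t)
      (fun e => natCast_ne_zero_of_lt (n := n) (k := t + 3) (by omega) (by omega)
        (by push_cast; linear_combination e))
      (fun e => natCast_ne_zero_of_lt (n := n) (k := t + 2) (by omega) (by omega)
        (by push_cast; linear_combination e))
      (fun e => natCast_ne_zero_of_lt (n := n) (k := t + 1) (by omega) (by omega)
        (by push_cast; linear_combination e))
    simp only [EdgesCross, Xor] at hcross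
    simp only [Q]
    tauto
  have hQ : ∀ m, m ≠ j → m ≠ j + 1 → (Q m ↔ Q (j + 2)) := by
    intro m h0 h1
    obtain ⟨t, ht, rfl⟩ := exists_eq_add_two_add_natCast h0 h1
    exact iff_of_forall_iff_add_one (P := Q) _ hstep (by omega)
  intro m
  by_cases h0 : m = j
  · subst h0
    exact iff_of_false (not_cycBtw_left _ _) (not_cycBtw_left _ _)
  by_cases h1 : m = j + 1
  · subst h1
    exact iff_of_false (not_cycBtw_right _ _) (not_cycBtw_right _ _)
  exact (hQ m h0 h1).2 ((hQ l hl hl').1 hjl)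

lemma sub_eq_of_sameArc [NeZero n] [Nontrivial (ZMod n)] {j : ZMod n} (h : SameArc π π' j) :
    π (j + 1) - π j = π' (j + 1) - π' j := by
  have hcard : ∀ ρ : Perm (ZMod n), #{l | InArc ρ j l} = (ρ (j + 1) - ρ j).val - 1 :=
    fun ρ => (card_equiv ρ fun _ => by rw [mem_filter, mem_filter]; simp [InArc]).trans
      (card_filter_cycBtw _ _)
  have hpos : ∀ ρ : Perm (ZMod n), 0 < (ρ (j + 1) - ρ j).val :=
    fun ρ => ZMod.val_pos.2 (sub_ne_zero.2 (ρ.injective.ne (by simp)))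
  have hcount : (π (j + 1) - π j).val - 1 = (π' (j + 1) - π' j).val - 1 := by
    rw [← hcard π, ← hcard π', filter_congr fun l _ => h l]
  have := hpos π
  have := hpos π'
  exact ZMod.val_injective n (by omega)

lemma sameArc_add_one (hn : 3 ≤ n) (h : SameCrossings π π') {j : ZMod n}
    (hj : SameArc π π' j) : SameArc π π' (j + 1) := by
  have : NeZero n := ⟨by omega⟩
  obtain ⟨h1, h2⟩ := one_ne_zero_and_two_ne_zero hn
  -- both sides say that `ρ j, ρ (j + 2), ρ (j + 1)` lie on the cycle in this cyclic order
  have hrot : ∀ ρ : Perm (ZMod n), InArc ρ j (j + 2) ↔ InArc ρ (j + 1) j := fun ρ => by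
    rw [InArc, InArc, cycBtw_rotate, cycBtw_rotate, add_assoc, one_add_one_eq_two]
  refine sameArc_of_inArc_iff hn h (l := j) (by simpa using h1) ?_
    ((hrot π).symm.trans ((hj _).trans (hrot π')))
  rw [add_assoc, one_add_one_eq_two]
  simpa using h2

lemma eq_addLeft_mul_of_sameArc_zero (hn : 3 ≤ n) (h : SameCrossings π π')
    (h0 : SameArc π π' 0) : π' = Equiv.addLeft (π' 0 - π 0) * π := by
  have : NeZero n := ⟨by omega⟩
  have : Nontrivial (ZMod n) := ZMod.nontrivial_iff.2 (by omega)
  have hall : ∀ j, SameArc π π' j := zmod_induction h0 fun j => sameArc_add_one hn h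
  have hconst : ∀ j, π' j - π j = π' 0 - π 0 := zmod_induction rfl fun j hj => by
    linear_combination hj - sub_eq_of_sameArc (hall j)
  ext j
  simp only [Perm.mul_apply, Equiv.coe_addLeft]
  linear_combination hconst j

theorem sameCrossings_iff_mul_inv_mem_dihedral (hn : 3 ≤ n) :
    SameCrossings π π' ↔ π' * π⁻¹ ∈ dihedral n := by
  have : NeZero n := ⟨by omega⟩
  refine ⟨fun h => ?_, fun hg => by simpa using sameCrossings_mul_left (π := π) hg⟩
  obtain ⟨h1, h2⟩ := one_ne_zero_and_two_ne_zero hn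
  have h21 : (2 : ZMod n) ≠ 0 + 1 := fun e => h1 (by linear_combination e)
  by_cases h02 : InArc π 0 2 ↔ InArc π' 0 2
  · rw [eq_addLeft_mul_of_sameArc_zero hn h (sameArc_of_inArc_iff hn h h2 h21 h02),
      mul_inv_cancel_right]
    exact addLeft_mem_dihedral _
  · have h' : SameCrossings π (Equiv.neg (ZMod n) * π') :=
      h.trans (sameCrossings_mul_left neg_mem_dihedral)
    have hrev : InArc (Equiv.neg (ZMod n) * π') 0 2 ↔ ¬InArc π' 0 2 :=
      inArc_mul_iff_of_reverses reversesCycBtw_neg (by simpa using h1.symm) h2 h21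
    obtain ⟨c, hc⟩ : ∃ c, Equiv.neg (ZMod n) * π' = Equiv.addLeft c * π :=
      ⟨_, eq_addLeft_mul_of_sameArc_zero hn h'
        (sameArc_of_inArc_iff hn h' h2 h21 (by rw [hrev]; tauto))⟩
    rw [eq_inv_mul_of_mul_eq hc, mul_assoc, mul_inv_cancel_right]
    exact mul_mem (inv_mem neg_mem_dihedral) (addLeft_mem_dihedral c)

end Reconstruction

section Sign

variable {K : Type*} [Field K]

lemma u_mk_eq_mul (z : ZMod n → K) (i j : ZMod n) :
    u z s(i, j) =
      (z (i + 1) - z j) / (z i - z j) * ((z i - z (j + 1)) / (z (i + 1) - z (j + 1))) := by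
  rw [div_mul_div_comm, mul_comm (z (i + 1) - z j)]
  rfl

variable [LinearOrder K] [IsStrictOrderedRing K]

lemma mul_neg_iff_xor {a b : K} (ha : a ≠ 0) (hb : b ≠ 0) :
    a * b < 0 ↔ Xor (a < 0) (b < 0) := by
  rcases ha.lt_or_gt with ha | ha <;> rcases hb.lt_or_gt with hb | hb <;>
    simp [Xor, ha, hb, ha.not_gt, hb.not_gt, mul_neg_iff]

lemma sub_div_sub_neg_iff (a b c : K) : (b - c) / (a - c) < 0 ↔ c ∈ Set.uIoo a b := by
  rw [div_neg_iff, sub_pos, sub_neg, sub_pos, sub_neg]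
  rcases le_total a b with hab | hab
  · rw [Set.uIoo_of_le hab, Set.mem_Ioo]
    constructor
    · rintro (⟨h1, h2⟩ | ⟨h1, h2⟩) <;> constructor <;> linarith
    · exact fun h => .inl ⟨h.2, h.1⟩
  · rw [Set.uIoo_of_ge hab, Set.mem_Ioo]
    constructor
    · rintro (⟨h1, h2⟩ | ⟨h1, h2⟩) <;> constructor <;> linarith
    · exact fun h => .inr ⟨h.1, h.2⟩

variable {z : ZMod n → K} {i j : ZMod n}

lemma u_mk_ne_zero (hz : Function.Injective z) (h1 : j ≠ i - 1) (h2 : j ≠ i)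
    (h3 : j ≠ i + 1) : u z s(i, j) ≠ 0 := by
  obtain ⟨-, hj1, hj1'⟩ := chord_endpoints_ne h1 h2
  rw [u_mk_eq_mul]
  exact mul_ne_zero
    (div_ne_zero (sub_ne_zero.2 (hz.ne h3.symm)) (sub_ne_zero.2 (hz.ne h2.symm)))
    (div_ne_zero (sub_ne_zero.2 (hz.ne hj1.symm)) (sub_ne_zero.2 (hz.ne hj1'.symm)))

lemma u_mk_neg_iff (hz : Function.Injective z) (h1 : j ≠ i - 1) (h2 : j ≠ i)
    (h3 : j ≠ i + 1) : u z s(i, j) < 0 ↔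
      Xor (z j ∈ Set.uIoo (z i) (z (i + 1))) (z (j + 1) ∈ Set.uIoo (z i) (z (i + 1))) := by
  have hne := u_mk_ne_zero hz h1 h2 h3
  rw [u_mk_eq_mul] at hne ⊢
  rw [mul_neg_iff_xor (left_ne_zero_of_mul hne) (right_ne_zero_of_mul hne), sub_div_sub_neg_iff,
    sub_div_sub_neg_iff, Set.uIoo_comm (z (i + 1))]

lemma mem_uIoo_iff_of_lt_iff {ι α β : Type*} [LinearOrder α] [LinearOrder β] {f : ι → α}
    {g : ι → β} (h : ∀ x y, f x < f y ↔ g x < g y) (x a b : ι) :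
    f x ∈ Set.uIoo (f a) (f b) ↔ g x ∈ Set.uIoo (g a) (g b) := by
  simp only [Set.uIoo, Set.mem_Ioo, inf_lt_iff, lt_sup_iff, h]

lemma lt_iff_val_lt_of_sorted [NeZero n] {α : Type*} [LinearOrder α] {z : ZMod n → α}
    {σ : Perm (ZMod n)}
    (hσ : ∀ i j : ZMod n, i.val < j.val → z (σ i) < z (σ j)) (x y : ZMod n) :
    z x < z y ↔ (σ⁻¹ x).val < (σ⁻¹ y).val := by
  have key : ∀ i j : ZMod n, z (σ i) < z (σ j) ↔ i.val < j.val := fun i j => by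
    refine ⟨fun h => lt_of_not_ge fun hle => ?_, hσ i j⟩
    rcases hle.lt_or_eq with hlt | heq
    · exact (hσ j i hlt).asymm h
    · rw [ZMod.val_injective n heq] at h
      exact lt_irrefl _ h
  simpa using key (σ⁻¹ x) (σ⁻¹ y)

lemma u_mk_neg_iff_edgesCross [NeZero n] {σ : Perm (ZMod n)} (hz : Function.Injective z)
    (hσ : ∀ i j : ZMod n, i.val < j.val → z (σ i) < z (σ j))
    (h1 : j ≠ i - 1) (h2 : j ≠ i) (h3 : j ≠ i + 1) :
    u z s(i, j) < 0 ↔ EdgesCross σ⁻¹ i j := by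
  obtain ⟨hi, hj1, hj1'⟩ := chord_endpoints_ne h1 h2
  have hπ := σ⁻¹.injective
  rw [u_mk_neg_iff hz h1 h2 h3, mem_uIoo_iff_of_lt_iff (lt_iff_val_lt_of_sorted hσ),
    mem_uIoo_iff_of_lt_iff (lt_iff_val_lt_of_sorted hσ), EdgesCross, InArc, InArc,
    cycBtw_iff_val_mem_uIoo (hπ.ne hi) (hπ.ne h2) (hπ.ne h3),
    cycBtw_iff_val_mem_uIoo (hπ.ne hi) (hπ.ne hj1) (hπ.ne hj1')]
  by_cases hr : (σ⁻¹ i).val < (σ⁻¹ (i + 1)).val <;>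
    simp only [hr, iff_true, iff_false, xor_not_not]

end Sign

lemma sign_eq_sign_iff {a b : ℝ} (ha : a ≠ 0) (hb : b ≠ 0) :
    Real.sign a = Real.sign b ↔ (a < 0 ↔ b < 0) := by
  rcases ha.lt_or_gt with ha | ha <;> rcases hb.lt_or_gt with hb | hb <;>
    simp [Real.sign_of_neg, Real.sign_of_pos, ha, hb, ha.not_gt, hb.not_gt] <;> norm_num

lemma mk_mem_chords [NeZero n] {i j : ZMod n} (h1 : j ≠ i - 1) (h2 : j ≠ i)
    (h3 : j ≠ i + 1) : s(i, j) ∈ chords n := by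
  refine mem_filter.2 ⟨mem_univ _, fun i' j' h => ?_⟩
  rcases Sym2.eq_iff.1 h with ⟨rfl, rfl⟩ | ⟨rfl, rfl⟩
  · exact ⟨h1, h2, h3⟩
  · exact ⟨fun e => h3 (by linear_combination -e), h2.symm,
      fun e => h1 (by linear_combination -e)⟩

lemma forall_mem_chords_iff [NeZero n] {P : Sym2 (ZMod n) → Prop} :
    (∀ e ∈ chords n, P e) ↔
      ∀ i j : ZMod n, j ≠ i - 1 → j ≠ i → j ≠ i + 1 → P s(i, j) := by
  refine ⟨fun h i j h1 h2 h3 => h _ (mk_mem_chords h1 h2 h3), fun h e he => ?_⟩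
  induction e using Sym2.ind with
  | h i j =>
    obtain ⟨h1, h2, h3⟩ := (mem_filter.1 he).2 i j rfl
    exact h i j h1 h2 h3

/-- For `n ≥ 4` and injective `z, z' : ZMod n → ℝ`, sorted by
permutations `σ, σ'`, all dihedral coordinates of `z` and `z'` have equal signs iff
`σ⁻¹ ∘ σ'` lies in the dihedral subgroup generated by `x ↦ x + 1` and `x ↦ -x`. -/
theorem same_signs_iff_dihedral (n : ℕ) [NeZero n] (hn : 4 ≤ n) (z z' : ZMod n → ℝ)
    (hz : Function.Injective z) (hz' : Function.Injective z')
    (σ σ' : Equiv.Perm (ZMod n))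
    (hσ : ∀ i j : ZMod n, i.val < j.val → z (σ i) < z (σ j))
    (hσ' : ∀ i j : ZMod n, i.val < j.val → z' (σ' i) < z' (σ' j)) :
    (∀ e ∈ chords n, Real.sign (u z e) = Real.sign (u z' e)) ↔
      σ⁻¹ * σ' ∈ Subgroup.closure
        ({Equiv.addLeft (1 : ZMod n), Equiv.neg (ZMod n)} : Set (Equiv.Perm (ZMod n))) := by
  have hsigns : (∀ e ∈ chords n, Real.sign (u z e) = Real.sign (u z' e)) ↔
      SameCrossings σ'⁻¹ σ⁻¹ := by
    rw [forall_mem_chords_iff]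
    refine forall₂_congr fun i j => imp_congr_right fun h1 => imp_congr_right fun h2 =>
      imp_congr_right fun h3 => ?_
    rw [sign_eq_sign_iff (u_mk_ne_zero hz h1 h2 h3) (u_mk_ne_zero hz' h1 h2 h3),
      u_mk_neg_iff_edgesCross hz hσ h1 h2 h3, u_mk_neg_iff_edgesCross hz' hσ' h1 h2 h3]
    exact iff_comm
  rw [hsigns, sameCrossings_iff_mul_inv_mem_dihedral (by omega), inv_inv]
  rfl

end M0n
end
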